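/- arXiv:1006.2888 — 2 statements merged into one kernel-verified Lean document; each statement's English description precedes it below -/
import Mathlib

section
/- Let p̄ = (p_1, p_2, ...) be a sequence of probabilities with p_l < 1 for all l > 0. Assume that for some ε > 0 the set {n ∈ ℕ : ∑_{l=1}^n p_l ≥ n^ε} is unbounded. Then for some q̄ ∈ Gen_3(p̄) and the L-sentence ψ := ∃x ∀y ¬(x ∼ y) (asserting the existence of an isolated vertex), both ψ and ¬ψ hold infinitely often in M^n_{q̄}. -/
open FirstOrder Filter

/-- The simple graph on `Fin n` determined by a boolean function on unordered pairs. -/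
def graphOf {n : ℕ} (f : Sym2 (Fin n) → Bool) : SimpleGraph (Fin n) where
  Adj i j := i ≠ j ∧ f s(i, j)
  symm := by
    constructor
    intro i j h
    exact ⟨Ne.symm h.1, by rw [Sym2.eq_swap]; exact h.2⟩
  loopless := by constructor; intro i h; exact h.1 rfl

/-- The probability that the pair `e` is an edge, given edge probabilities `p`
indexed by the distance between the endpoints. -/
noncomputable def edgeProb (p : ℕ → ℝ) {n : ℕ} (e : Sym2 (Fin n)) : ℝ :=
  Sym2.lift ⟨fun i j => p (Nat.dist i.val j.val),
    fun i j => by simp only [Nat.dist_comm]⟩ e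

/-- The probability weight of a particular configuration of edges. -/
noncomputable def weight (p : ℕ → ℝ) {n : ℕ} (f : Sym2 (Fin n) → Bool) : ℝ :=
  ∏ e : Sym2 (Fin n),
    if e.IsDiag then (if f e then 0 else 1)
    else (if f e then edgeProb p e else 1 - edgeProb p e)

open Classical in
/-- The probability that the random graph `M^n_{p̄}` (on vertex set `Fin n`,
representing `[n] = {1,…,n}`, where distinct vertices at distance `d` are joined
independently with probability `p d`) satisfies the event `E`. -/
noncomputable def probEvent (p : ℕ → ℝ) (n : ℕ) (E : SimpleGraph (Fin n) → Prop) : ℝ :=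
  ∑ f : Sym2 (Fin n) → Bool, if E (graphOf f) then weight p f else 0

/-- The probability that `M^n_{p̄}` satisfies the first-order sentence `ψ`
in the language of graphs. -/
noncomputable def probSat (p : ℕ → ℝ) (n : ℕ) (ψ : Language.graph.Sentence) : ℝ :=
  probEvent p n (fun G => @Language.Sentence.Realize _ _ G.structure ψ)

/-- `M^n_{p̄}` satisfies the 0-1 law for first order logic. -/
def ZeroOneLaw (p : ℕ → ℝ) : Prop :=
  ∀ ψ : Language.graph.Sentence, ∃ c : ℝ, (c = 0 ∨ c = 1) ∧
    Tendsto (fun n => probSat p n ψ) atTop (nhds c)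

/-- `M^n_{p̄}` satisfies the convergence law for first order logic. -/
def ConvergenceLaw (p : ℕ → ℝ) : Prop :=
  ∀ ψ : Language.graph.Sentence, ∃ c : ℝ,
    Tendsto (fun n => probSat p n ψ) atTop (nhds c)

/-- `M^n_{p̄}` satisfies the weak convergence law for first order logic. -/
def WeakConvergenceLaw (p : ℕ → ℝ) : Prop :=
  ∀ ψ : Language.graph.Sentence,
    limsup (fun n => probSat p n ψ) atTop - liminf (fun n => probSat p n ψ) atTop < 1

/-- `q̄ ∈ Gen₁(p̄)`: `q̄` is obtained from `p̄` by inserting zeros (indices start at 1). -/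
def Gen1 (p q : ℕ → ℝ) : Prop :=
  ∃ f : ℕ → ℕ, (∀ i j, 1 ≤ i → i < j → f i < f j) ∧ (∀ i, 1 ≤ i → 1 ≤ f i) ∧
    (∀ i, 1 ≤ i → q (f i) = p i) ∧
    (∀ l, 1 ≤ l → (∀ i, 1 ≤ i → f i ≠ l) → q l = 0)

/-- `q̄ ∈ Gen₂(p̄)`: `q̄` is obtained from `p̄` by decreasing entries. -/
def Gen2 (p q : ℕ → ℝ) : Prop :=
  ∀ l, 1 ≤ l → q l ∈ Set.Icc (0 : ℝ) (p l)

/-- `q̄ ∈ Gen₃(p̄)`: `q̄` is obtained from `p̄` by replacing some entries with zero. -/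
def Gen3 (p q : ℕ → ℝ) : Prop :=
  ∀ l, 1 ≤ l → q l = 0 ∨ q l = p l

/-- The condition `lim_{n→∞} log(∏_{i=1}^n (1-p_i))/log n = 0`. -/
def StarCondition (p : ℕ → ℝ) : Prop :=
  Tendsto (fun n : ℕ => Real.log (∏ i ∈ Finset.Icc 1 n, (1 - p i)) / Real.log n)
    atTop (nhds 0)

/-!
Keep `p` on the blocks `(a₀, a₁], (a₂, a₃], …` and replace it by `0` on the gaps
`(a₁, a₂], (a₃, a₄], …`, for a rapidly increasing sequence `a`.

At `n = a_{2j+1} = 2k` every vertex has a potential neighbour at each distance `l ≤ k`, so by the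
union bound an isolated vertex exists with probability at most
`2k ∏_{l ≤ k} (1 - q_l) ≤ 2k exp (a_{2j} - ∑_{l ≤ k} p_l)`; this is small because
`∑_{l ≤ k} p_l ≥ k^ε` for suitable `k`, which beats `log k`.

At `n = a_{2j+2} = m (2B + 1)` with `B = a_{2j+1}` no edge of length in `(B, n)` can occur, so the
vertices `0, 2B + 1, 2 (2B + 1), …` have disjoint sets of possible edges. They are therefore
isolated independently, each with probability at least `(∏_{l ≤ B} (1 - p_l))² > 0`, and for
large `m` some vertex is isolated with probability close to `1`.
-/

open Finset

section Probability

variable {q : ℕ → ℝ} {n : ℕ}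

noncomputable def edgeFactor (q : ℕ → ℝ) {n : ℕ} (e : Sym2 (Fin n)) (b : Bool) : ℝ :=
  if e.IsDiag then (if b then 0 else 1) else (if b then edgeProb q e else 1 - edgeProb q e)

lemma weight_eq_prod_edgeFactor (f : Sym2 (Fin n) → Bool) :
    weight q f = ∏ e, edgeFactor q e (f e) := rfl

lemma edgeProb_mk (i j : Fin n) : edgeProb q s(i, j) = q (Nat.dist i j) := rfl

lemma mem_edgeSet_graphOf {f : Sym2 (Fin n) → Bool} {e : Sym2 (Fin n)} :
    e ∈ (graphOf f).edgeSet ↔ ¬ e.IsDiag ∧ f e := by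
  induction e using Sym2.inductionOn with
  | hf i j => simp [graphOf]

lemma probEvent_congr {E F : SimpleGraph (Fin n) → Prop} (h : ∀ G, E G ↔ F G) :
    probEvent q n E = probEvent q n F := by
  obtain rfl : E = F := funext fun G => propext (h G)
  rfl

lemma probEvent_and_add_and_not (E F : SimpleGraph (Fin n) → Prop) :
    probEvent q n (fun G => E G ∧ F G) + probEvent q n (fun G => E G ∧ ¬ F G)
      = probEvent q n E := by
  classical
  simp only [probEvent, ← sum_add_distrib]
  refine sum_congr rfl fun f _ => ?_
  by_cases hE : E (graphOf f) <;> by_cases hF : F (graphOf f) <;> simp [hE, hF]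

lemma probEvent_forall_notMem_edgeSet (T : Finset (Sym2 (Fin n)))
    (hT : ∀ e ∈ T, ¬ e.IsDiag) :
    probEvent q n (fun G => ∀ e ∈ T, e ∉ G.edgeSet) = ∏ e ∈ T, (1 - edgeProb q e) := by
  classical
  set g : Sym2 (Fin n) → Bool → ℝ := fun e b => if e ∈ T ∧ b then 0 else edgeFactor q e b
  have hterm : ∀ f : Sym2 (Fin n) → Bool,
      (if ∀ e ∈ T, e ∉ (graphOf f).edgeSet then weight q f else 0) = ∏ e, g e (f e) := by
    intro f
    split_ifs with h
    · rw [weight_eq_prod_edgeFactor]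
      refine prod_congr rfl fun e _ => (if_neg ?_).symm
      exact fun ⟨he, hfe⟩ => h e he (mem_edgeSet_graphOf.2 ⟨hT e he, hfe⟩)
    · obtain ⟨e, he, hmem⟩ : ∃ e ∈ T, e ∈ (graphOf f).edgeSet := by simpa using h
      refine (prod_eq_zero (mem_univ e) ?_).symm
      exact if_pos ⟨he, (mem_edgeSet_graphOf.1 hmem).2⟩
  have hsum : ∀ e, ∑ b, g e b = if e ∈ T then 1 - edgeProb q e else 1 := by
    intro e
    by_cases he : e ∈ T
    · simp [g, he, edgeFactor, hT e he]
    · by_cases hd : e.IsDiag <;> simp [g, he, hd, edgeFactor]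
  calc probEvent q n (fun G => ∀ e ∈ T, e ∉ G.edgeSet)
      = ∑ f : Sym2 (Fin n) → Bool, ∏ e, g e (f e) :=
        sum_congr rfl fun f _ => by convert hterm f
    _ = ∏ e ∈ T, (1 - edgeProb q e) := by
        rw [← Fintype.prod_sum]
        simp only [hsum, Fintype.prod_ite_mem]

lemma probEvent_true : probEvent q n (fun _ => True) = 1 := by
  simpa using probEvent_forall_notMem_edgeSet (q := q) (n := n) ∅ (by simp)

lemma probEvent_not (E : SimpleGraph (Fin n) → Prop) :
    probEvent q n (fun G => ¬ E G) = 1 - probEvent q n E := by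
  have h := probEvent_and_add_and_not (q := q) (fun _ => True) E
  simp only [true_and] at h
  linarith [probEvent_true (q := q) (n := n)]

lemma probEvent_absent_and_forall_exists {α : Type*} [DecidableEq α]
    (T : α → Finset (Sym2 (Fin n))) (hT : ∀ v, ∀ e ∈ T v, ¬ e.IsDiag) (V : Finset α)
    (hV : (V : Set α).PairwiseDisjoint T) (T₀ : Finset (Sym2 (Fin n)))
    (hT₀ : ∀ e ∈ T₀, ¬ e.IsDiag) (hT₀V : ∀ v ∈ V, Disjoint T₀ (T v)) :
    probEvent q n (fun G => (∀ e ∈ T₀, e ∉ G.edgeSet) ∧ ∀ v ∈ V, ∃ e ∈ T v, e ∈ G.edgeSet)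
      = (∏ e ∈ T₀, (1 - edgeProb q e)) * ∏ v ∈ V, (1 - ∏ e ∈ T v, (1 - edgeProb q e)) := by
  induction V using Finset.induction_on generalizing T₀ with
  | empty => simpa using probEvent_forall_notMem_edgeSet T₀ hT₀
  | insert a V ha ih =>
    have hV' : (V : Set α).PairwiseDisjoint T := hV.subset (by simp)
    have hT₀a := hT₀V a (mem_insert_self a V)
    have h₁ := ih hV' T₀ hT₀ fun v hv => hT₀V v (mem_insert_of_mem hv)
    have h₂ := ih hV' (T₀ ∪ T a) (by simpa [or_imp, forall_and] using ⟨hT₀, hT a⟩)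
      fun v hv => disjoint_union_left.2 ⟨hT₀V v (mem_insert_of_mem hv),
        hV (by simp) (by simp [hv]) (ne_of_mem_of_not_mem hv ha).symm⟩
    have hsplit := probEvent_and_add_and_not (q := q)
      (fun G => (∀ e ∈ T₀, e ∉ G.edgeSet) ∧ ∀ v ∈ V, ∃ e ∈ T v, e ∈ G.edgeSet)
      (fun G => ∃ e ∈ T a, e ∈ G.edgeSet)
    have hins : probEvent q n (fun G => (∀ e ∈ T₀, e ∉ G.edgeSet) ∧
        ∀ v ∈ insert a V, ∃ e ∈ T v, e ∈ G.edgeSet)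
        = probEvent q n (fun G => ((∀ e ∈ T₀, e ∉ G.edgeSet) ∧
          ∀ v ∈ V, ∃ e ∈ T v, e ∈ G.edgeSet) ∧ ∃ e ∈ T a, e ∈ G.edgeSet) :=
      probEvent_congr fun G => by simp only [forall_mem_insert]; tauto
    have hunion : probEvent q n (fun G => ((∀ e ∈ T₀, e ∉ G.edgeSet) ∧
        ∀ v ∈ V, ∃ e ∈ T v, e ∈ G.edgeSet) ∧ ¬ ∃ e ∈ T a, e ∈ G.edgeSet)
        = probEvent q n (fun G => (∀ e ∈ T₀ ∪ T a, e ∉ G.edgeSet) ∧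
          ∀ v ∈ V, ∃ e ∈ T v, e ∈ G.edgeSet) :=
      probEvent_congr fun G => by
        simp only [mem_union, or_imp, forall_and, not_exists, not_and]
        tauto
    rw [hins, eq_sub_of_add_eq hsplit, hunion, h₁, h₂, prod_insert ha, prod_union hT₀a]
    ring

lemma probEvent_forall_exists_mem_edgeSet {α : Type*} [DecidableEq α]
    (T : α → Finset (Sym2 (Fin n))) (hT : ∀ v, ∀ e ∈ T v, ¬ e.IsDiag) (V : Finset α)
    (hV : (V : Set α).PairwiseDisjoint T) :
    probEvent q n (fun G => ∀ v ∈ V, ∃ e ∈ T v, e ∈ G.edgeSet)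
      = ∏ v ∈ V, (1 - ∏ e ∈ T v, (1 - edgeProb q e)) := by
  simpa using probEvent_absent_and_forall_exists T hT V hV ∅ (by simp) (by simp)

variable (hq : ∀ l, 1 ≤ l → q l ∈ Set.Icc (0 : ℝ) 1)
include hq

lemma edgeProb_mem_Icc {e : Sym2 (Fin n)} (he : ¬ e.IsDiag) :
    edgeProb q e ∈ Set.Icc (0 : ℝ) 1 := by
  induction e using Sym2.inductionOn with
  | hf i j => exact hq _ (Nat.dist_pos_of_ne fun h => he (Sym2.mk_isDiag_iff.2 (Fin.ext h)))

lemma edgeFactor_nonneg (e : Sym2 (Fin n)) (b : Bool) : 0 ≤ edgeFactor q e b := by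
  by_cases hd : e.IsDiag
  · simp only [edgeFactor, hd, if_true]; split_ifs <;> norm_num
  · obtain ⟨h0, h1⟩ := edgeProb_mem_Icc hq hd
    simp only [edgeFactor, hd, if_false]; split_ifs <;> linarith

lemma weight_nonneg (f : Sym2 (Fin n) → Bool) : 0 ≤ weight q f := by
  rw [weight_eq_prod_edgeFactor]
  exact prod_nonneg fun e _ => edgeFactor_nonneg hq e (f e)

lemma probEvent_nonneg (E : SimpleGraph (Fin n) → Prop) : 0 ≤ probEvent q n E :=
  sum_nonneg fun f _ => by split_ifs <;> simp [weight_nonneg hq f]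

lemma probEvent_le_one (E : SimpleGraph (Fin n) → Prop) : probEvent q n E ≤ 1 := by
  linarith [probEvent_not (q := q) E, probEvent_nonneg hq (fun G => ¬ E G)]

lemma probEvent_le_of_imp_or_null {E F : SimpleGraph (Fin n) → Prop}
    (h : ∀ G, E G → F G ∨ ∃ e ∈ G.edgeSet, edgeProb q e = 0) :
    probEvent q n E ≤ probEvent q n F := by
  refine sum_le_sum fun f _ => ?_
  by_cases hE : E (graphOf f)
  · rcases h _ hE with hF | ⟨e, he, hnull⟩
    · simp [hE, hF]
    · obtain ⟨hnd, hfe⟩ := mem_edgeSet_graphOf.1 he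
      have hw : weight q f = 0 := by
        rw [weight_eq_prod_edgeFactor]
        exact prod_eq_zero (mem_univ e) (by simp [edgeFactor, hnd, hfe, hnull])
      split_ifs <;> simp [hw]
  · split_ifs <;> simp [weight_nonneg hq f]

lemma probEvent_mono {E F : SimpleGraph (Fin n) → Prop} (h : ∀ G, E G → F G) :
    probEvent q n E ≤ probEvent q n F :=
  probEvent_le_of_imp_or_null hq fun G hE => .inl (h G hE)

lemma probEvent_exists_le {ι : Type*} (s : Finset ι) (E : ι → SimpleGraph (Fin n) → Prop) :
    probEvent q n (fun G => ∃ i ∈ s, E i G) ≤ ∑ i ∈ s, probEvent q n (E i) := by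
  classical
  simp only [probEvent]
  rw [sum_comm (s := s)]
  refine sum_le_sum fun f _ => ?_
  have hterms : ∀ i ∈ s, 0 ≤ if E i (graphOf f) then weight q f else 0 :=
    fun i _ => by split_ifs <;> simp [weight_nonneg hq f]
  split_ifs with h
  · obtain ⟨i, hi, hEi⟩ := h
    simpa [hEi] using single_le_sum hterms hi
  · exact sum_nonneg hterms

end Probability

section IsolatedVertices

lemma exists_natDist_eq_of_le {n : ℕ} (x : Fin (2 * n)) {l : ℕ} (hl : l ≤ n) :
    ∃ y : Fin (2 * n), Nat.dist x y = l := by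
  by_cases hx : (x : ℕ) < n
  · exact ⟨⟨x + l, by omega⟩, by simp [Nat.dist]⟩
  · exact ⟨⟨x - l, by omega⟩, by simp [Nat.dist]; omega⟩

def nearEdges {N : ℕ} (B : ℕ) (v : Fin N) : Finset (Sym2 (Fin N)) :=
  (univ.filter fun y => y ≠ v ∧ Nat.dist v y ≤ B).image fun y => s(v, y)

lemma not_isDiag_of_mem_nearEdges {N B : ℕ} {v : Fin N} {e : Sym2 (Fin N)}
    (he : e ∈ nearEdges B v) : ¬ e.IsDiag := by
  obtain ⟨y, hy, rfl⟩ := mem_image.1 he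
  simpa [eq_comm] using (mem_filter.1 hy).2.1

lemma pairwiseDisjoint_nearEdges {N B : ℕ} {V : Set (Fin N)}
    (hV : V.Pairwise fun u v => B < Nat.dist u v) : V.PairwiseDisjoint (nearEdges B) := by
  intro u hu v hv huv
  refine disjoint_left.2 fun e heu hev => ?_
  obtain ⟨y, hy, rfl⟩ := mem_image.1 heu
  obtain ⟨z, hz, hzy⟩ := mem_image.1 hev
  rcases Sym2.eq_iff.1 hzy with ⟨rfl, -⟩ | ⟨rfl, rfl⟩
  · exact huv rfl
  · exact (hV hu hv huv).not_ge (mem_filter.1 hy).2.2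

variable {q : ℕ → ℝ} (hq : ∀ l, 1 ≤ l → q l ∈ Set.Icc (0 : ℝ) 1)
include hq

lemma probEvent_isolated_le {N : ℕ} (x : Fin N) (D : Finset ℕ)
    (hD : ∀ l ∈ D, 1 ≤ l ∧ ∃ y : Fin N, Nat.dist x y = l) :
    probEvent q N (fun G => ∀ y, ¬ G.Adj x y) ≤ ∏ l ∈ D, (1 - q l) := by
  classical
  have : Nonempty (Fin N) := ⟨x⟩
  choose! y hy using fun l hl => (hD l hl).2
  have hne : ∀ l ∈ D, x ≠ y l := fun l hl h => by
    have := (hD l hl).1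
    rw [← hy l hl, ← h, Nat.dist_self] at this
    omega
  have hinj : Set.InjOn (fun l => s(x, y l)) D := fun l hl l' hl' h => by
    rw [← hy l hl, ← hy l' hl', Sym2.congr_right.1 h]
  calc probEvent q N (fun G => ∀ y, ¬ G.Adj x y)
      ≤ probEvent q N (fun G => ∀ e ∈ D.image (fun l => s(x, y l)), e ∉ G.edgeSet) :=
        probEvent_mono hq fun G h => by simpa using fun l _ => h (y l)
    _ = ∏ l ∈ D, (1 - q l) := by
        rw [probEvent_forall_notMem_edgeSet _ (by simpa using hne), prod_image hinj]
        exact prod_congr rfl fun l hl => by rw [edgeProb_mk, hy l hl]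

lemma probEvent_exists_isolated_le (n : ℕ) :
    probEvent q (2 * n) (fun G => ∃ x, ∀ y, ¬ G.Adj x y)
      ≤ 2 * n * ∏ l ∈ Icc 1 n, (1 - q l) := by
  calc probEvent q (2 * n) (fun G => ∃ x, ∀ y, ¬ G.Adj x y)
      ≤ ∑ x : Fin (2 * n), probEvent q (2 * n) (fun G => ∀ y, ¬ G.Adj x y) := by
        simpa using probEvent_exists_le hq univ fun x G => ∀ y, ¬ G.Adj x y
    _ ≤ ∑ _x : Fin (2 * n), ∏ l ∈ Icc 1 n, (1 - q l) :=
        sum_le_sum fun x _ => probEvent_isolated_le hq x _ fun l hl =>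
          ⟨(mem_Icc.1 hl).1, exists_natDist_eq_of_le x (mem_Icc.1 hl).2⟩
    _ = 2 * n * ∏ l ∈ Icc 1 n, (1 - q l) := by simp

/-- Each length `l ≤ B` is realised by at most two edges at `v`, one on either side. -/
lemma sq_prod_le_prod_nearEdges {N : ℕ} (B : ℕ) (v : Fin N) :
    (∏ l ∈ Icc 1 B, (1 - q l)) ^ 2 ≤ ∏ e ∈ nearEdges B v, (1 - edgeProb q e) := by
  set S := univ.filter fun y : Fin N => y ≠ v ∧ Nat.dist v y ≤ B
  set side : Fin N → ℕ × Bool := fun y => (Nat.dist v y, decide (v < y))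
  have hside : Set.InjOn side S := fun y _ z _ h => by
    simp only [side, Prod.mk.injEq, decide_eq_decide, Nat.dist] at h
    exact Fin.ext (by omega)
  have hmaps : S.image side ⊆ Icc 1 B ×ˢ univ := fun d hd => by
    obtain ⟨y, hy, rfl⟩ := mem_image.1 hd
    obtain ⟨hyv, hdist⟩ := (mem_filter.1 hy).2
    exact mem_product.2 ⟨mem_Icc.2 ⟨Nat.dist_pos_of_ne fun h => hyv (Fin.ext h).symm, hdist⟩,
      mem_univ _⟩
  have h01 : ∀ d ∈ Icc 1 B ×ˢ (univ : Finset Bool), 1 - q d.1 ∈ Set.Icc (0 : ℝ) 1 :=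
    fun d hd => by
      obtain ⟨h0, h1⟩ := hq d.1 (mem_Icc.1 (mem_product.1 hd).1).1
      constructor <;> linarith
  calc (∏ l ∈ Icc 1 B, (1 - q l)) ^ 2
      = ∏ d ∈ Icc 1 B ×ˢ (univ : Finset Bool), (1 - q d.1) := by
        rw [prod_product, ← prod_pow]
        simp [sq]
    _ ≤ ∏ d ∈ S.image side, (1 - q d.1) :=
        prod_le_prod_of_subset_of_le_one hmaps (fun d hd => (h01 d hd).1)
          fun d hd _ => (h01 d hd).2
    _ = ∏ e ∈ nearEdges B v, (1 - edgeProb q e) := by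
        rw [nearEdges, prod_image hside, prod_image fun y _ z _ h => Sym2.congr_right.1 h]
        rfl

lemma probEvent_no_isolated_le {B m : ℕ}
    (hzero : ∀ l, B < l → l < m * (2 * B + 1) → q l = 0) :
    probEvent q (m * (2 * B + 1)) (fun G => ¬ ∃ x, ∀ y, ¬ G.Adj x y)
      ≤ (1 - (∏ l ∈ Icc 1 B, (1 - q l)) ^ 2) ^ m := by
  classical
  set N := m * (2 * B + 1)
  set center : Fin m → Fin N :=
    fun t => ⟨t * (2 * B + 1), Nat.mul_lt_mul_of_pos_right t.2 (by omega)⟩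
  have hcenter : Function.Injective center := fun s t h =>
    Fin.ext (Nat.eq_of_mul_eq_mul_right (by omega) (congrArg Fin.val h))
  set V := univ.image center
  have hV : (V : Set (Fin N)).Pairwise fun u v => B < Nat.dist u v := by
    simp only [V, coe_image, coe_univ, Set.image_univ]
    rintro _ ⟨s, rfl⟩ _ ⟨t, rfl⟩ hst
    have : 1 ≤ Nat.dist s t := Nat.dist_pos_of_ne fun h => hst (congrArg center (Fin.ext h))
    simp only [center, Nat.dist_mul_right]
    nlinarith
  have hcover : ∀ G : SimpleGraph (Fin N), (¬ ∃ x, ∀ y, ¬ G.Adj x y) →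
      (∀ v ∈ V, ∃ e ∈ nearEdges B v, e ∈ G.edgeSet) ∨ ∃ e ∈ G.edgeSet, edgeProb q e = 0 := by
    intro G hG
    by_cases hnull : ∃ e ∈ G.edgeSet, edgeProb q e = 0
    · exact .inr hnull
    refine .inl fun v _ => ?_
    obtain ⟨y, hy⟩ : ∃ y, G.Adj v y := by simpa using not_exists.1 hG v
    refine ⟨s(v, y), mem_image_of_mem _ (mem_filter.2 ⟨mem_univ _, hy.ne.symm, ?_⟩), hy⟩
    by_contra hfar
    refine hnull ⟨s(v, y), hy, hzero _ (not_le.1 hfar) ?_⟩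
    have := v.2; have := y.2
    simp only [Nat.dist]; omega
  have hle_one : ∀ v : Fin N, ∏ e ∈ nearEdges B v, (1 - edgeProb q e) ≤ 1 := fun v => by
    rw [← probEvent_forall_notMem_edgeSet _ fun e => not_isDiag_of_mem_nearEdges]
    exact probEvent_le_one hq _
  calc probEvent q N (fun G => ¬ ∃ x, ∀ y, ¬ G.Adj x y)
      ≤ probEvent q N (fun G => ∀ v ∈ V, ∃ e ∈ nearEdges B v, e ∈ G.edgeSet) :=
        probEvent_le_of_imp_or_null hq hcover
    _ = ∏ v ∈ V, (1 - ∏ e ∈ nearEdges B v, (1 - edgeProb q e)) :=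
        probEvent_forall_exists_mem_edgeSet _ (fun _ _ => not_isDiag_of_mem_nearEdges) V
          (pairwiseDisjoint_nearEdges hV)
    _ ≤ ∏ _v ∈ V, (1 - (∏ l ∈ Icc 1 B, (1 - q l)) ^ 2) :=
        prod_le_prod (fun v _ => sub_nonneg.2 (hle_one v))
          fun v _ => sub_le_sub_left (sq_prod_le_prod_nearEdges hq B v) 1
    _ = (1 - (∏ l ∈ Icc 1 B, (1 - q l)) ^ 2) ^ m := by
        rw [prod_const, card_image_of_injective _ hcenter, card_univ, Fintype.card_fin]

end IsolatedVertices

section Sizes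

variable {p : ℕ → ℝ}

lemma exists_log_add_le_sum {ε : ℝ} (hε : 0 < ε)
    (hub : ∀ m : ℕ, ∃ n : ℕ, m ≤ n ∧ (n : ℝ) ^ ε ≤ ∑ l ∈ Icc 1 n, p l) (c : ℕ) (C : ℝ) :
    ∃ n : ℕ, c < n ∧ Real.log n + C ≤ ∑ l ∈ Icc 1 n, p l := by
  have hlog : ∀ᶠ x : ℝ in atTop, Real.log x + C ≤ x ^ ε := by
    filter_upwards [(isLittleO_log_rpow_atTop hε).bound one_half_pos,
      (tendsto_rpow_atTop hε).eventually_ge_atTop (2 * C), eventually_ge_atTop 0] with x h1 h2 h3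
    rw [Real.norm_eq_abs, Real.norm_of_nonneg (Real.rpow_nonneg h3 ε)] at h1
    linarith [le_abs_self (Real.log x)]
  obtain ⟨x₀, hx₀⟩ := eventually_atTop.1 hlog
  obtain ⟨n, hn, hsum⟩ := hub (max (c + 1) ⌈x₀⌉₊)
  refine ⟨n, by omega, (hx₀ n ?_).trans hsum⟩
  exact (Nat.le_ceil x₀).trans (by exact_mod_cast (le_max_right _ _).trans hn)

variable (hp : ∀ l, 1 ≤ l → 0 ≤ p l ∧ p l < 1)
include hp

lemma Gen3.mem_Icc {q : ℕ → ℝ} (hq : Gen3 p q) (l : ℕ) (hl : 1 ≤ l) :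
    q l ∈ Set.Icc (0 : ℝ) 1 := by
  obtain ⟨h0, h1⟩ := hp l hl
  rcases hq l hl with h | h <;> rw [h] <;> constructor <;> linarith

lemma exists_size_isolated_unlikely {ε : ℝ} (hε : 0 < ε)
    (hub : ∀ m : ℕ, ∃ n : ℕ, m ≤ n ∧ (n : ℝ) ^ ε ≤ ∑ l ∈ Icc 1 n, p l) (c : ℕ) {δ : ℝ}
    (hδ : 0 < δ) :
    ∃ N, c < N ∧ ∀ q, Gen3 p q → (∀ l, c < l → l ≤ N → q l = p l) →
      probEvent q N (fun G => ∃ x, ∀ y, ¬ G.Adj x y) ≤ δ := by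
  obtain ⟨n, hcn, hn⟩ := exists_log_add_le_sum hε hub c (c + Real.log 2 - Real.log δ)
  refine ⟨2 * n, by omega, fun q hq hqp => ?_⟩
  have hq01 := hq.mem_Icc hp
  have hsum : ∑ l ∈ Icc 1 n, p l ≤ c + ∑ l ∈ Ioc c n, p l := by
    have hsplit : ∑ l ∈ Icc 1 n, p l = ∑ l ∈ Ioc 0 c, p l + ∑ l ∈ Ioc c n, p l := by
      rw [sum_Ioc_consecutive _ (Nat.zero_le c) hcn.le, ← Icc_add_one_left_eq_Ioc, zero_add]
    have hhead : ∑ l ∈ Ioc 0 c, p l ≤ c := by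
      simpa using sum_le_card_nsmul _ _ 1 fun l hl => (hp l (mem_Ioc.1 hl).1).2.le
    linarith
  have hprod : ∏ l ∈ Icc 1 n, (1 - q l) ≤ Real.exp (-∑ l ∈ Ioc c n, p l) :=
    calc ∏ l ∈ Icc 1 n, (1 - q l)
        ≤ ∏ l ∈ Ioc c n, (1 - q l) :=
          prod_le_prod_of_subset_of_le_one
            (fun l hl => mem_Icc.2 ⟨by have := (mem_Ioc.1 hl).1; omega, (mem_Ioc.1 hl).2⟩)
            (fun l hl => sub_nonneg.2 (hq01 l (mem_Icc.1 hl).1).2)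
            fun l hl _ => sub_le_self _ (hq01 l (mem_Icc.1 hl).1).1
      _ = ∏ l ∈ Ioc c n, (1 - p l) :=
          prod_congr rfl fun l hl => by
            rw [hqp l (mem_Ioc.1 hl).1 (by linarith [(mem_Ioc.1 hl).2])]
      _ ≤ Real.exp (-∑ l ∈ Ioc c n, p l) := by
          rw [← sum_neg_distrib, Real.exp_sum]
          exact prod_le_prod
            (fun l hl => sub_nonneg.2 (hp l (by have := (mem_Ioc.1 hl).1; omega)).2.le)
            fun l _ => Real.one_sub_le_exp_neg _
  have hn0 : (0 : ℝ) < n := by exact_mod_cast (show 0 < n by omega)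
  calc probEvent q (2 * n) (fun G => ∃ x, ∀ y, ¬ G.Adj x y)
      ≤ 2 * n * ∏ l ∈ Icc 1 n, (1 - q l) := probEvent_exists_isolated_le hq01 n
    _ ≤ 2 * n * Real.exp (-∑ l ∈ Ioc c n, p l) := by gcongr
    _ = Real.exp (Real.log (2 * n) - ∑ l ∈ Ioc c n, p l) := by
        rw [sub_eq_add_neg, Real.exp_add, Real.exp_log (by positivity)]
    _ ≤ Real.exp (Real.log δ) := by
        rw [Real.exp_le_exp, Real.log_mul two_ne_zero hn0.ne']
        linarith
    _ = δ := Real.exp_log hδ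

lemma exists_size_isolated_likely (B : ℕ) {δ : ℝ} (hδ : 0 < δ) :
    ∃ N, B < N ∧ ∀ q, Gen3 p q → (∀ l, B < l → l < N → q l = 0) →
      probEvent q N (fun G => ¬ ∃ x, ∀ y, ¬ G.Adj x y) ≤ δ := by
  set μ := ∏ l ∈ Icc 1 B, (1 - p l)
  have hμ0 : 0 < μ := prod_pos fun l hl => sub_pos.2 (hp l (mem_Icc.1 hl).1).2
  have hμ1 : μ ≤ 1 := prod_le_one (fun l hl => sub_nonneg.2 (hp l (mem_Icc.1 hl).1).2.le)
    fun l hl => sub_le_self _ (hp l (mem_Icc.1 hl).1).1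
  obtain ⟨m, hm⟩ := exists_pow_lt_of_lt_one hδ (show 1 - μ ^ 2 < 1 by nlinarith)
  refine ⟨(m + 1) * (2 * B + 1), by nlinarith, fun q hq hzero => ?_⟩
  have hq01 := hq.mem_Icc hp
  have hμq : μ ≤ ∏ l ∈ Icc 1 B, (1 - q l) :=
    prod_le_prod (fun l hl => sub_nonneg.2 (hp l (mem_Icc.1 hl).1).2.le) fun l hl => by
      rcases hq l (mem_Icc.1 hl).1 with h | h <;> rw [h]
      linarith [(hp l (mem_Icc.1 hl).1).1]
  have hμq1 : ∏ l ∈ Icc 1 B, (1 - q l) ≤ 1 :=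
    prod_le_one (fun l hl => sub_nonneg.2 (hq01 l (mem_Icc.1 hl).1).2)
      fun l hl => sub_le_self _ (hq01 l (mem_Icc.1 hl).1).1
  calc probEvent q ((m + 1) * (2 * B + 1)) (fun G => ¬ ∃ x, ∀ y, ¬ G.Adj x y)
      ≤ (1 - (∏ l ∈ Icc 1 B, (1 - q l)) ^ 2) ^ (m + 1) := probEvent_no_isolated_le hq01 hzero
    _ ≤ (1 - μ ^ 2) ^ (m + 1) := by gcongr; nlinarith
    _ ≤ (1 - μ ^ 2) ^ m := pow_le_pow_of_le_one (by nlinarith) (by nlinarith) (by omega)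
    _ ≤ δ := hm.le

end Sizes

lemma exists_strictMono_interleave (U L : ℕ → ℕ → ℕ) (hU : ∀ j c, c < U j c)
    (hL : ∀ j c, c < L j c) :
    ∃ a : ℕ → ℕ, StrictMono a ∧ (∀ j, a (2 * j + 1) = U j (a (2 * j))) ∧
      ∀ j, a (2 * j + 2) = L j (a (2 * j + 1)) := by
  let a : ℕ → ℕ := fun k =>
    Nat.rec 0 (fun k c => if Even k then U (k / 2) c else L (k / 2) c) k
  have ha : ∀ k, a (k + 1) = if Even k then U (k / 2) (a k) else L (k / 2) (a k) := fun _ => rfl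
  refine ⟨a, strictMono_nat_of_lt_succ fun k => ?_, fun j => ?_, fun j => ?_⟩
  · rw [ha]
    split_ifs
    exacts [hU _ _, hL _ _]
  · simp [ha]
  · rw [ha, if_neg (by simp), show (2 * j + 1) / 2 = j by omega]

open Classical in
noncomputable def keepOddBlocks (a : ℕ → ℕ) (p : ℕ → ℝ) (l : ℕ) : ℝ :=
  if ∃ j, a (2 * j) < l ∧ l ≤ a (2 * j + 1) then p l else 0

lemma gen3_keepOddBlocks (a : ℕ → ℕ) (p : ℕ → ℝ) : Gen3 p (keepOddBlocks a p) := fun l _ => by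
  unfold keepOddBlocks
  split_ifs <;> simp

lemma keepOddBlocks_of_mem {a : ℕ → ℕ} (p : ℕ → ℝ) {j l : ℕ} (h₁ : a (2 * j) < l)
    (h₂ : l ≤ a (2 * j + 1)) : keepOddBlocks a p l = p l :=
  if_pos ⟨j, h₁, h₂⟩

lemma keepOddBlocks_of_mem_gap {a : ℕ → ℕ} (ha : StrictMono a) (p : ℕ → ℝ) {j l : ℕ}
    (h₁ : a (2 * j + 1) < l) (h₂ : l ≤ a (2 * j + 2)) : keepOddBlocks a p l = 0 := by
  refine if_neg fun ⟨i, hi₁, hi₂⟩ => ?_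
  rcases le_or_gt i j with hij | hij
  · have := ha.monotone (show 2 * i + 1 ≤ 2 * j + 1 by omega)
    omega
  · have := ha.monotone (show 2 * j + 2 ≤ 2 * i by omega)
    omega

lemma limsup_eq_one_of_subseq {u : ℕ → ℝ} (h0 : ∀ n, 0 ≤ u n) (h1 : ∀ n, u n ≤ 1)
    {φ : ℕ → ℕ} (hφ : Tendsto φ atTop atTop) (hu : ∀ j : ℕ, 1 - 1 / ((j : ℝ) + 1) ≤ u (φ j)) :
    limsup u atTop = 1 := by
  refine le_antisymm (limsup_le_of_le (isCoboundedUnder_le_of_le atTop h0) (.of_forall h1))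
    (le_of_forall_sub_le fun δ hδ => le_limsup_of_frequently_le ?_ (isBoundedUnder_of ⟨1, h1⟩))
  refine hφ.frequently (Eventually.frequently ?_)
  filter_upwards [tendsto_one_div_add_atTop_nhds_zero_nat.eventually (gt_mem_nhds hδ)] with j hj
  linarith [hu j]

theorem statement_10 (p : ℕ → ℝ) (hp : ∀ l, 1 ≤ l → 0 ≤ p l ∧ p l < 1)
    (ε : ℝ) (hε : 0 < ε)
    (hub : ∀ m : ℕ, ∃ n : ℕ, m ≤ n ∧ (n : ℝ) ^ ε ≤ ∑ l ∈ Finset.Icc 1 n, p l) :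
    ∃ q : ℕ → ℝ, Gen3 p q ∧
      limsup (fun n => probEvent q n
        (fun G => ∃ x : Fin n, ∀ y : Fin n, ¬ G.Adj x y)) atTop = 1 ∧
      limsup (fun n => probEvent q n
        (fun G => ¬ ∃ x : Fin n, ∀ y : Fin n, ¬ G.Adj x y)) atTop = 1 := by
  choose U hcU hU using fun (j c : ℕ) =>
    exists_size_isolated_unlikely hp hε hub c (δ := 1 / ((j : ℝ) + 1)) (by positivity)
  choose L hcL hL using fun (j B : ℕ) =>
    exists_size_isolated_likely hp B (δ := 1 / ((j : ℝ) + 1)) (by positivity)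
  obtain ⟨a, ha, haU, haL⟩ := exists_strictMono_interleave U L hcU hcL
  set q := keepOddBlocks a p
  have hq : Gen3 p q := gen3_keepOddBlocks a p
  have hq01 := hq.mem_Icc hp
  refine ⟨q, hq, limsup_eq_one_of_subseq (fun n => probEvent_nonneg hq01 _)
      (fun n => probEvent_le_one hq01 _) (φ := fun j => a (2 * j + 2)) ?_ fun j => ?_,
    limsup_eq_one_of_subseq (fun n => probEvent_nonneg hq01 _)
      (fun n => probEvent_le_one hq01 _) (φ := fun j => a (2 * j + 1)) ?_ fun j => ?_⟩
  · exact (ha.comp fun i j h => by omega).tendsto_atTop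
  · have := hL j _ q hq fun l h₁ h₂ => keepOddBlocks_of_mem_gap ha p h₁ (haL j ▸ h₂).le
    rw [probEvent_not, ← haL] at this
    linarith
  · exact (ha.comp fun i j h => by omega).tendsto_atTop
  · have := hU j _ q hq fun l h₁ h₂ => keepOddBlocks_of_mem p h₁ (haU j ▸ h₂)
    rw [probEvent_not, haU]
    linarith
end

section
/- Let p̄ = (p_1, p_2, ...) be a sequence with p_i ∈ {0, 1} for all i > 0 and such that U*(p̄) := {l > 0 : p_l = 1} is finite. Then M^n_{p̄} satisfies the 0-1 law for L. -/
open FirstOrder Filter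

/-- `U*(p̄) = {l > 0 : p_l = 1}`. -/
def Ustar (p : ℕ → ℝ) : Set ℕ := {l | 0 < l ∧ p l = 1}

/-!
For a `0`-`1` sequence the random graph `M^n_p̄` is deterministic: it is the distance graph on
`[n]` whose edges join points at distance in `U*(p̄)`. If `U*(p̄) ⊆ [0, d]`, two such graphs on
`[n]` and `[m]` with `n, m ≥ d·3^r + 2` satisfy the same sentences of quantifier rank `r`:
the duplicator wins the `r`-round Ehrenfeucht–Fraïssé game by keeping, for every two played
pairs of points and also for the two pairs of endpoints, the differences in the two graphs
either equal or both beyond `d·3^t` in the same direction, where `t` rounds are left. So the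
truth value of every sentence is eventually constant, and its probability tends to `0` or `1`.
-/

namespace FirstOrder.Language

variable {L : Language} {α : Type*}

def BoundedFormula.quantifierRank : ∀ {n}, L.BoundedFormula α n → ℕ
  | _, .falsum => 0
  | _, .equal _ _ => 0
  | _, .rel _ _ => 0
  | _, .imp φ ψ => max φ.quantifierRank ψ.quantifierRank
  | _, .all φ => φ.quantifierRank + 1

theorem Term.exists_eq_var [L.IsRelational] {k : ℕ} (t : L.Term (Empty ⊕ Fin k)) :
    ∃ i, t = var (Sum.inr i) := by
  cases t with
  | var v => rcases v with ⟨⟨⟩⟩ | i; exact ⟨i, rfl⟩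
  | func f _ => exact isEmptyElim f

variable {M N : Type*} [L.Structure M] [L.Structure N]

def SameAtomicType {k : ℕ} (a : Fin k → M) (b : Fin k → N) : Prop :=
  (∀ i j, a i = a j ↔ b i = b j) ∧
    ∀ {l} (R : L.Relations l) (f : Fin l → Fin k),
      Structure.RelMap R (a ∘ f) ↔ Structure.RelMap R (b ∘ f)

variable (L M N) in
/-- `R t` is a winning condition for the duplicator in the Ehrenfeucht–Fraïssé game with `t`
rounds left. -/
structure IsBackAndForth (R : ℕ → ∀ {k}, (Fin k → M) → (Fin k → N) → Prop) : Prop where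
  sameAtomicType {t k} {a : Fin k → M} {b : Fin k → N} : R t a b → SameAtomicType (L := L) a b
  forth {t k} {a : Fin k → M} {b : Fin k → N} :
    R (t + 1) a b → ∀ x, ∃ y, R t (Fin.snoc a x) (Fin.snoc b y)
  back {t k} {a : Fin k → M} {b : Fin k → N} :
    R (t + 1) a b → ∀ y, ∃ x, R t (Fin.snoc a x) (Fin.snoc b y)

theorem IsBackAndForth.realize_iff [L.IsRelational]
    {R : ℕ → ∀ {k}, (Fin k → M) → (Fin k → N) → Prop} (hR : IsBackAndForth L M N R) :
    ∀ {k} (φ : L.BoundedFormula Empty k) {t} (_ : φ.quantifierRank ≤ t)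
      {a : Fin k → M} {b : Fin k → N}, R t a b → (φ.Realize default a ↔ φ.Realize default b)
  | _, .falsum, _, _, _, _, _ => Iff.rfl
  | _, .equal t₁ t₂, _, _, _, _, hab => by
    obtain ⟨i, rfl⟩ := t₁.exists_eq_var
    obtain ⟨j, rfl⟩ := t₂.exists_eq_var
    exact (hR.sameAtomicType hab).1 i j
  | _, .rel S ts, _, _, _, _, hab => by
    choose f hf using fun i => (ts i).exists_eq_var
    obtain rfl : ts = fun i => Term.var (Sum.inr (f i)) := funext hf
    exact (hR.sameAtomicType hab).2 S f
  | _, .imp φ ψ, _, ht, _, _, hab => by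
    simp only [BoundedFormula.realize_imp]
    rw [hR.realize_iff φ (le_of_max_le_left ht) hab,
      hR.realize_iff ψ (le_of_max_le_right ht) hab]
  | _, .all φ, t, ht, a, b, hab => by
    obtain _ | s := t
    · exact absurd ht (Nat.not_succ_le_zero _)
    have hφ : φ.quantifierRank ≤ s := Nat.le_of_succ_le_succ ht
    simp only [BoundedFormula.realize_all]
    constructor
    · intro h y
      obtain ⟨x, hx⟩ := hR.back hab y
      exact (hR.realize_iff φ hφ hx).1 (h x)
    · intro h x
      obtain ⟨y, hy⟩ := hR.forth hab x
      exact (hR.realize_iff φ hφ hy).2 (h y)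

theorem IsBackAndForth.sentence_realize_iff [L.IsRelational]
    {R : ℕ → ∀ {k}, (Fin k → M) → (Fin k → N) → Prop} (hR : IsBackAndForth L M N R)
    (ψ : L.Sentence) {t : ℕ} (ht : ψ.quantifierRank ≤ t)
    (h : R t (default : Fin 0 → M) (default : Fin 0 → N)) :
    M ⊨ ψ ↔ N ⊨ ψ :=
  hR.realize_iff ψ ht h

theorem sameAtomicType_of_adj_iff {V W : Type*} {G : SimpleGraph V} {H : SimpleGraph W}
    {k : ℕ} {a : Fin k → V} {b : Fin k → W}
    (h : ∀ i j, (a i = a j ↔ b i = b j) ∧ (G.Adj (a i) (a j) ↔ H.Adj (b i) (b j))) :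
    letI := G.structure; letI := H.structure; SameAtomicType (L := Language.graph) a b :=
  ⟨fun i j => (h i j).1, fun R f => by cases R; exact (h (f 0) (f 1)).2⟩

end FirstOrder.Language

open Language

def DiffAgree (T δ δ' : ℤ) : Prop :=
  δ = δ' ∨ (T < δ ∧ T < δ') ∨ (δ < -T ∧ δ' < -T)

namespace DiffAgree

variable {T δ δ' : ℤ}

theorem symm (h : DiffAgree T δ δ') : DiffAgree T δ' δ := by
  unfold DiffAgree at *; omega

theorem neg (h : DiffAgree T δ δ') : DiffAgree T (-δ) (-δ') := by
  unfold DiffAgree at *; omega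

theorem mono {T' : ℤ} (hT : T' ≤ T) (h : DiffAgree T δ δ') : DiffAgree T' δ δ' := by
  unfold DiffAgree at *; omega

theorem natDist {i j i' j' : ℕ} (h : DiffAgree T ((i : ℤ) - j) ((i' : ℤ) - j')) :
    Nat.dist i j = Nat.dist i' j' ∨ (T < Nat.dist i j ∧ T < Nat.dist i' j') := by
  unfold DiffAgree Nat.dist at *; omega

variable {x u₁ u₂ v₁ v₂ : ℤ}

theorem of_near (h : DiffAgree (3 * T) (u₁ - v₁) (u₂ - v₂)) (hu : |x - u₁| ≤ T) :
    DiffAgree T (x - v₁) (u₂ + (x - u₁) - v₂) := by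
  rw [abs_le] at hu; unfold DiffAgree at *; omega

theorem of_far (hT : 1 ≤ T) (h : DiffAgree (3 * T) (v₁ - u₁) (v₂ - u₂)) (hu : u₁ + T < x)
    (hv : T < |x - v₁|) (hvu : v₁ < x → v₁ ≤ u₁) : DiffAgree T (x - v₁) (u₂ + T + 1 - v₂) := by
  rw [lt_abs] at hv; unfold DiffAgree at *; omega

end DiffAgree

def PairwiseDiffAgree (T : ℤ) (S : Finset (ℤ × ℤ)) : Prop :=
  ∀ u ∈ S, ∀ v ∈ S, DiffAgree T (u.1 - v.1) (u.2 - v.2)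

namespace PairwiseDiffAgree

variable {T : ℤ} {S : Finset (ℤ × ℤ)}

theorem mono {T' : ℤ} (hT : T' ≤ T) (h : PairwiseDiffAgree T S) : PairwiseDiffAgree T' S :=
  fun u hu v hv => (h u hu v hv).mono hT

theorem image_swap (h : PairwiseDiffAgree T S) : PairwiseDiffAgree T (S.image Prod.swap) := by
  simp only [PairwiseDiffAgree, Finset.mem_image]
  rintro _ ⟨u, hu, rfl⟩ _ ⟨v, hv, rfl⟩
  exact (h u hu v hv).symm

theorem insert {p : ℤ × ℤ} (hS : PairwiseDiffAgree T S)
    (hp : ∀ u ∈ S, DiffAgree T (p.1 - u.1) (p.2 - u.2)) : PairwiseDiffAgree T (insert p S) := by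
  intro u hu v hv
  rw [Finset.mem_insert] at hu hv
  rcases hu with rfl | hu <;> rcases hv with rfl | hv
  · simp [DiffAgree]
  · exact hp v hv
  · simpa using (hp u hu).neg
  · exact hS u hu v hv

/-- The duplicator's answer to a move `x`: copy the nearest played point if `x` is close to one,
otherwise jump just past the image of the closest played point to the left. -/
theorem exists_diffAgree {x : ℤ} (hT : 1 ≤ T) (hS : PairwiseDiffAgree (3 * T) S)
    (h0 : (0, 0) ∈ S) (hx : 0 ≤ x) : ∃ y, ∀ v ∈ S, DiffAgree T (x - v.1) (y - v.2) := by
  by_cases hnear : ∃ u ∈ S, |x - u.1| ≤ T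
  · obtain ⟨u, hu, hxu⟩ := hnear
    exact ⟨u.2 + (x - u.1), fun v hv => (hS u hu v hv).of_near hxu⟩
  · push Not at hnear
    have hbelow : (S.filter (·.1 < x)).Nonempty := ⟨(0, 0), by
      have := hnear _ h0; rw [lt_abs] at this; simp [h0]; omega⟩
    obtain ⟨u, hu, hmax⟩ := (S.filter (·.1 < x)).exists_max_image Prod.fst hbelow
    rw [Finset.mem_filter] at hu
    have hu1 : u.1 + T < x := by have := hnear u hu.1; rw [lt_abs] at this; omega
    exact ⟨u.2 + T + 1, fun v hv => (hS v hv u hu.1).of_far hT hu1 (hnear v hv)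
      fun hvx => hmax v (Finset.mem_filter.2 ⟨hv, hvx⟩)⟩

end PairwiseDiffAgree

def distanceGraph (D : Set ℕ) (n : ℕ) : SimpleGraph (Fin n) where
  Adj i j := i ≠ j ∧ Nat.dist i j ∈ D
  symm := ⟨fun _ _ h => ⟨h.1.symm, Nat.dist_comm _ _ ▸ h.2⟩⟩
  loopless := ⟨fun _ h => h.1 rfl⟩

theorem distanceGraph_adj_iff_of_diffAgree {D : Set ℕ} {T : ℤ} (hT : 0 ≤ T)
    (hD : ∀ l ∈ D, (l : ℤ) ≤ T) {n m : ℕ} {i j : Fin n} {i' j' : Fin m}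
    (h : DiffAgree T ((i : ℤ) - j) ((i' : ℤ) - j')) :
    (i = j ↔ i' = j') ∧ ((distanceGraph D n).Adj i j ↔ (distanceGraph D m).Adj i' j') := by
  have hij : i = j ↔ i' = j' := by
    simp only [Fin.ext_iff]; unfold DiffAgree at h; omega
  refine ⟨hij, ?_⟩
  show i ≠ j ∧ Nat.dist i j ∈ D ↔ i' ≠ j' ∧ Nat.dist i' j' ∈ D
  rcases h.natDist with hd | ⟨hd, hd'⟩
  · rw [hd, ne_eq, hij]
  · exact iff_of_false (fun h => (hD _ h.2).not_gt hd) (fun h => (hD _ h.2).not_gt hd')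

section positions

variable {n m k : ℕ}

/-- The corners `(0, 0)` and `(n - 1, m - 1)` make the duplicator respect the ends of the two
paths. -/
def positions (a : Fin k → Fin n) (b : Fin k → Fin m) : Finset (ℤ × ℤ) :=
  insert (0, 0) (insert ((n : ℤ) - 1, (m : ℤ) - 1)
    (Finset.univ.image fun i => ((a i : ℤ), (b i : ℤ))))

theorem mem_positions (a : Fin k → Fin n) (b : Fin k → Fin m) (i : Fin k) :
    ((a i : ℤ), (b i : ℤ)) ∈ positions a b :=
  Finset.mem_insert_of_mem <| Finset.mem_insert_of_mem <| Finset.mem_image_of_mem _ <|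
    Finset.mem_univ i

theorem positions_snoc (a : Fin k → Fin n) (b : Fin k → Fin m) (x : Fin n) (y : Fin m) :
    positions (Fin.snoc a x) (Fin.snoc b y) = insert ((x : ℤ), (y : ℤ)) (positions a b) := by
  ext u
  simp only [positions, Finset.mem_insert, Finset.mem_image, Finset.mem_univ, true_and,
    Fin.exists_fin_succ', Fin.snoc_castSucc, Fin.snoc_last]
  tauto

theorem positions_swap (a : Fin k → Fin n) (b : Fin k → Fin m) :
    positions b a = (positions a b).image Prod.swap := by
  ext u
  simp [positions, Prod.ext_iff]

theorem pairwiseDiffAgree_positions_elim0 {T : ℤ} (hn : T + 2 ≤ n) (hm : T + 2 ≤ m) :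
    PairwiseDiffAgree T (positions (default : Fin 0 → Fin n) (default : Fin 0 → Fin m)) := by
  simp [PairwiseDiffAgree, positions, DiffAgree]
  omega

theorem PairwiseDiffAgree.exists_snoc {T : ℤ} (hT : 1 ≤ T) {a : Fin k → Fin n}
    {b : Fin k → Fin m} (h : PairwiseDiffAgree (3 * T) (positions a b)) (x : Fin n) :
    ∃ y : Fin m, PairwiseDiffAgree T (positions (Fin.snoc a x) (Fin.snoc b y)) := by
  obtain ⟨y, hy⟩ := h.exists_diffAgree hT (by simp [positions]) (Int.natCast_nonneg x)
  have h0 := hy (0, 0) (by simp [positions])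
  have h1 := hy ((n : ℤ) - 1, (m : ℤ) - 1) (by simp [positions])
  have hym : 0 ≤ y ∧ y < m := by unfold DiffAgree at h0 h1; simp only at h0 h1; omega
  refine ⟨⟨y.toNat, by omega⟩, ?_⟩
  rw [positions_snoc, Fin.val_mk, Int.toNat_of_nonneg hym.1]
  exact (h.mono (by omega)).insert hy

end positions

def distanceRel (d : ℕ) {n m : ℕ} (t : ℕ) {k : ℕ} (a : Fin k → Fin n) (b : Fin k → Fin m) :
    Prop :=
  PairwiseDiffAgree (d * 3 ^ t) (positions a b)

theorem isBackAndForth_distanceRel {D : Set ℕ} {d : ℕ} (hd : 1 ≤ d) (hD : ∀ l ∈ D, l ≤ d)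
    (n m : ℕ) :
    letI := (distanceGraph D n).structure; letI := (distanceGraph D m).structure
    IsBackAndForth Language.graph (Fin n) (Fin m) (distanceRel d) := by
  let _ := (distanceGraph D n).structure
  let _ := (distanceGraph D m).structure
  have hT : ∀ t, (1 : ℤ) ≤ d * 3 ^ t := fun t => one_le_mul_of_one_le_of_one_le
    (by exact_mod_cast hd) (one_le_pow₀ (by norm_num))
  have h3 : ∀ t, (d : ℤ) * 3 ^ (t + 1) = 3 * (d * 3 ^ t) := fun t => by ring
  refine ⟨fun {t k a b} h => sameAtomicType_of_adj_iff fun i j => ?_, fun h x => ?_,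
    fun h y => ?_⟩
  · refine distanceGraph_adj_iff_of_diffAgree (zero_le_one.trans (hT t))
      (fun l hl => ?_) (h _ (mem_positions a b i) _ (mem_positions a b j))
    calc (l : ℤ) ≤ d := by exact_mod_cast hD l hl
      _ ≤ d * 3 ^ t := le_mul_of_one_le_right (by positivity) (one_le_pow₀ (by norm_num))
  · rw [distanceRel, h3] at h
    exact h.exists_snoc (hT _) x
  · rw [distanceRel, h3] at h
    have h' := h.image_swap
    rw [← positions_swap] at h'
    obtain ⟨x, hx⟩ := h'.exists_snoc (hT _) y
    refine ⟨x, ?_⟩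
    have hx' := hx.image_swap
    rwa [← positions_swap] at hx'

theorem exists_forall_ge_realize_distanceGraph_iff {D : Set ℕ} (hD : BddAbove D)
    (ψ : Language.graph.Sentence) : ∃ N, ∀ n ≥ N,
      (@Sentence.Realize _ (Fin n) (distanceGraph D n).structure ψ ↔
        @Sentence.Realize _ (Fin N) (distanceGraph D N).structure ψ) := by
  obtain ⟨d, hd⟩ := hD
  refine ⟨(d + 1) * 3 ^ ψ.quantifierRank + 2, fun n hn => ?_⟩
  let _ := (distanceGraph D n).structure
  let _ := (distanceGraph D ((d + 1) * 3 ^ ψ.quantifierRank + 2)).structure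
  refine (isBackAndForth_distanceRel le_add_self (fun l hl => (hd hl).trans d.le_succ) n _)
    |>.sentence_realize_iff ψ le_rfl ?_
  exact pairwiseDiffAgree_positions_elim0 (by exact_mod_cast hn) (by push_cast; rfl)

open Classical in
noncomputable def forcedEdges (p : ℕ → ℝ) (n : ℕ) : Sym2 (Fin n) → Bool :=
  fun e => decide (¬ e.IsDiag ∧ edgeProb p e = 1)

theorem graphOf_forcedEdges (p : ℕ → ℝ) (n : ℕ) :
    graphOf (forcedEdges p n) = distanceGraph (Ustar p) n := by
  ext i j
  show (i ≠ j ∧ forcedEdges p n s(i, j)) ↔ (i ≠ j ∧ Nat.dist i j ∈ Ustar p)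
  refine and_congr_right fun hij => ?_
  have hpos : 0 < Nat.dist i j := Nat.dist_pos_of_ne (Fin.val_injective.ne hij)
  simp [forcedEdges, Ustar, edgeProb, hij, hpos]

section ZeroOneSequence

variable {p : ℕ → ℝ} (hp : ∀ i, 1 ≤ i → p i = 0 ∨ p i = 1)
include hp

theorem edgeProb_eq_zero_or_one {n : ℕ} {e : Sym2 (Fin n)} (he : ¬ e.IsDiag) :
    edgeProb p e = 0 ∨ edgeProb p e = 1 := by
  induction e using Sym2.ind with
  | _ i j =>
    rw [Sym2.mk_isDiag_iff] at he
    exact hp _ (Nat.dist_pos_of_ne (Fin.val_injective.ne he))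

theorem weight_eq_ite {n : ℕ} (f : Sym2 (Fin n) → Bool) :
    weight p f = if f = forcedEdges p n then 1 else 0 := by
  have hfactor : ∀ e : Sym2 (Fin n),
      (if e.IsDiag then (if f e then 0 else 1)
        else (if f e then edgeProb p e else 1 - edgeProb p e)) =
      if f e = forcedEdges p n e then 1 else 0 := by
    intro e
    by_cases he : e.IsDiag
    · cases f e <;> simp [forcedEdges, he]
    · rcases edgeProb_eq_zero_or_one hp he with h | h <;> cases f e <;> simp [forcedEdges, he, h]
  rw [weight, Finset.prod_congr rfl fun e _ => hfactor e, Fintype.prod_boole]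
  exact if_congr funext_iff.symm rfl rfl

open Classical in
theorem probEvent_eq_ite (n : ℕ) (E : SimpleGraph (Fin n) → Prop) :
    probEvent p n E = if E (graphOf (forcedEdges p n)) then 1 else 0 := by
  rw [probEvent, Finset.sum_eq_single (forcedEdges p n)]
  · rw [weight_eq_ite hp, if_pos rfl]
  · intro f _ hf
    rw [weight_eq_ite hp, if_neg hf, ite_self]
  · exact fun h => absurd (Finset.mem_univ _) h

open Classical in
theorem probSat_eq_ite (n : ℕ) (ψ : Language.graph.Sentence) :
    probSat p n ψ =
      if @Sentence.Realize _ (Fin n) (distanceGraph (Ustar p) n).structure ψ then 1 else 0 := by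
  rw [probSat, probEvent_eq_ite hp, graphOf_forcedEdges]

end ZeroOneSequence

theorem statement_16 (p : ℕ → ℝ) (hp : ∀ i, 1 ≤ i → p i = 0 ∨ p i = 1)
    (hU : (Ustar p).Finite) : ZeroOneLaw p := by
  classical
  intro ψ
  obtain ⟨N, hN⟩ := exists_forall_ge_realize_distanceGraph_iff hU.bddAbove ψ
  refine ⟨if @Sentence.Realize _ (Fin N) (distanceGraph (Ustar p) N).structure ψ then 1 else 0,
    by split_ifs <;> simp, tendsto_const_nhds.congr' ?_⟩
  filter_upwards [eventually_ge_atTop N] with n hn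
  rw [probSat_eq_ite hp, if_congr (hN n hn) rfl rfl]
end
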